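/- arXiv:1712.08661 — 2 statements merged into one kernel-verified Lean document; each statement's English description precedes it below -/
import Mathlib

section
/- Generalized permutation: let T be a causal team with G(T) finite and acyclic, X and Y sets of variables in dom(T), x ∈ Ran(X) and y ∈ Ran(Y), such that whenever a variable belongs to both X and Y, the values assigned to it by x and by y coincide. Then (T_{X=x})_{Y=y} = (T_{Y=y})_{X=x}. -/
open scoped Classical

/-- A (pre-)causal team over variables `V` and values `A`: a team of assignments,
a set of endogenous variables, a directed graph (the edge relation), ranges for the
variables, and partial structural functions.  The function `fn Y` is given on full
assignments (it is required, via `IsCausal`, to depend only on the parents of `Y`);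
`fn Y s = none` means that the invariant function for `Y` is undefined on the
parent-values of `s`. -/
structure PreCausalTeam (V A : Type) where
  team : Set (V → A)
  endo : Set V
  edge : V → V → Prop
  ran : V → Set A
  fn : V → (V → A) → Option A

namespace PreCausalTeam

variable {V A : Type}

/-- The defining conditions of a causal team: values lie in the ranges, the structural
functions exist only for endogenous variables, depend only on the parents and take values
in the ranges, the team satisfies the functional dependence of each endogenous variable
on its parents (condition (b)), and the team complies with the structural functions
(condition (c)). -/
def IsCausal (T : PreCausalTeam V A) : Prop :=
  (∀ s ∈ T.team, ∀ X, s X ∈ T.ran X) ∧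
  (∀ Y, Y ∉ T.endo → ∀ s, T.fn Y s = none) ∧
  (∀ Y, ∀ s s' : V → A, (∀ X, T.edge X Y → s X = s' X) → T.fn Y s = T.fn Y s') ∧
  (∀ Y s a, T.fn Y s = some a → a ∈ T.ran Y) ∧
  (∀ s ∈ T.team, ∀ s' ∈ T.team, ∀ Y ∈ T.endo,
    (∀ X, T.edge X Y → s X = s' X) → s Y = s' Y) ∧
  (∀ s ∈ T.team, ∀ Y a, T.fn Y s = some a → s Y = a)

/-- A causal team is parametric if the structural function of each endogenous variable
is defined on every combination of values (from the ranges) for its parents. -/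
def Parametric (T : PreCausalTeam V A) : Prop :=
  ∀ Y ∈ T.endo, ∀ s : V → A, (∀ X, T.edge X Y → s X ∈ T.ran X) → (T.fn Y s).isSome

/-- A causal team is recursive if its graph is acyclic (no directed cycles). -/
def Recursive (T : PreCausalTeam V A) : Prop :=
  ∀ v, ¬ Relation.TransGen T.edge v v

/-- The causal (sub)team obtained by replacing the team component (graph, ranges and
functions are kept). -/
def withTeam (T : PreCausalTeam V A) (S : Set (V → A)) : PreCausalTeam V A :=
  { T with team := S }

/-- The effect of the intervention `do(X = x)` on a single assignment `s` of a
recursive causal team: the variables in `X` are set to the prescribed values, and the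
descendants of `X` are updated (in order of evaluation distance) using the structural
functions; variables whose structural function is undefined at the new parent values
keep their old value.  (Defined by well-founded recursion along the acyclic graph.) -/
noncomputable def doAssign (T : PreCausalTeam V A) (X : Set V) (x : V → A)
    (s : V → A) : V → A :=
  if h : WellFounded T.edge then
    WellFounded.fix (C := fun _ => A) h fun W ih =>
      if W ∈ X then x W
      else (T.fn W fun P => if hp : T.edge P W then ih P hp else s P).getD (s W)
  else s

/-- The intervened causal team `T_{X=x}`: all arrows into `X` are deleted, the variables
of `X` become exogenous (their structural functions are removed), and every assignment
of the team is updated by the intervention algorithm. -/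
noncomputable def doTeam (T : PreCausalTeam V A) (X : Set V) (x : V → A) :
    PreCausalTeam V A where
  team := T.doAssign X x '' T.team
  endo := T.endo \ X
  edge := fun a b => T.edge a b ∧ b ∉ X
  ran := T.ran
  fn := fun W s => if W ∈ X then none else T.fn W s

end PreCausalTeam

namespace PreCausalTeam

variable {V A : Type}

lemma doAssign_eq' (T : PreCausalTeam V A) (h : WellFounded T.edge)
    (X : Set V) (x s : V → A) (W : V) :
    T.doAssign X x s W =
      if W ∈ X then x W
      else (T.fn W fun P => if T.edge P W then T.doAssign X x s P else s P).getD (s W) := by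
  conv_lhs => rw [PreCausalTeam.doAssign, dif_pos h, WellFounded.fix_eq]
  by_cases hW : W ∈ X
  · simp [hW]
  · simp only [if_neg hW]
    congr 2
    funext P
    by_cases hp : T.edge P W
    · simp only [dif_pos hp, if_pos hp, PreCausalTeam.doAssign, dif_pos h]
    · simp [hp]

lemma doTeam_fn' (T : PreCausalTeam V A) (X : Set V) (x : V → A) (W : V) (s : V → A) :
    (T.doTeam X x).fn W s = if W ∈ X then none else T.fn W s := rfl

lemma doTeam_edge' (T : PreCausalTeam V A) (X : Set V) (x : V → A) (P W : V) :
    (T.doTeam X x).edge P W ↔ T.edge P W ∧ W ∉ X := Iff.rfl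

lemma pre_ext (t1 t2 : PreCausalTeam V A) (h1 : t1.team = t2.team)
    (h2 : t1.endo = t2.endo) (h3 : t1.edge = t2.edge) (h4 : t1.ran = t2.ran)
    (h5 : t1.fn = t2.fn) : t1 = t2 := by
  cases t1; cases t2; simp_all

end PreCausalTeam

/-- Generalized permutation: for a (parametric, recursive) causal team
`T` with finite acyclic graph, sets of variables `X, Y` with values `x ∈ Ran(X)`,
`y ∈ Ran(Y)` that agree on the common variables, one has
`(T_{X=x})_{Y=y} = (T_{Y=y})_{X=x}`. -/
theorem permutation_general {V A : Type} [Fintype V]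
    (T : PreCausalTeam V A)
    (hcau : T.IsCausal) (hpar : T.Parametric) (hrec : T.Recursive)
    (X Y : Set V) (x y : V → A)
    (hx : ∀ v ∈ X, x v ∈ T.ran v) (hy : ∀ v ∈ Y, y v ∈ T.ran v)
    (hcompat : ∀ v, v ∈ X → v ∈ Y → x v = y v) :
    (T.doTeam X x).doTeam Y y = (T.doTeam Y y).doTeam X x := by
  classical
  obtain ⟨hran, hnone, hdep, hranfn, _, _⟩ := hcau
  have hwf : WellFounded T.edge := by
    have hT : WellFounded (Relation.TransGen T.edge) := by
      haveI : IsTrans V (Relation.TransGen T.edge) := ⟨fun _ _ _ => Relation.TransGen.trans⟩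
      haveI : IsIrrefl V (Relation.TransGen T.edge) := ⟨hrec⟩
      exact Finite.wellFounded_of_trans_of_irrefl _
    exact Subrelation.wf (fun hab => Relation.TransGen.single hab) hT
  have hwfX : WellFounded (T.doTeam X x).edge := Subrelation.wf (fun hab => hab.1) hwf
  have hwfY : WellFounded (T.doTeam Y y).edge := Subrelation.wf (fun hab => hab.1) hwf
  -- basic facts about single interventions
  have gX : ∀ (s : V → A) (W : V), W ∈ X → T.doAssign X x s W = x W := fun s W hW => by
    rw [PreCausalTeam.doAssign_eq' T hwf, if_pos hW]
  have gY : ∀ (s : V → A) (W : V), W ∈ Y → T.doAssign Y y s W = y W := fun s W hW => by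
    rw [PreCausalTeam.doAssign_eq' T hwf, if_pos hW]
  have gXo : ∀ (s : V → A) (W : V), W ∉ X → W ∉ T.endo → T.doAssign X x s W = s W :=
    fun s W hW hE => by
      rw [PreCausalTeam.doAssign_eq' T hwf, if_neg hW, hnone W hE, Option.getD_none]
  have gYo : ∀ (s : V → A) (W : V), W ∉ Y → W ∉ T.endo → T.doAssign Y y s W = s W :=
    fun s W hW hE => by
      rw [PreCausalTeam.doAssign_eq' T hwf, if_neg hW, hnone W hE, Option.getD_none]
  -- key pointwise commutation
  have key : ∀ s ∈ T.team, ∀ W : V,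
      (T.doTeam X x).doAssign Y y (T.doAssign X x s) W
        = (T.doTeam Y y).doAssign X x (T.doAssign Y y s) W ∧
      (T.doTeam X x).doAssign Y y (T.doAssign X x s) W ∈ T.ran W := by
    intro s hs W
    induction W using WellFounded.induction hwf with
    | _ W ih =>
    by_cases hWY : W ∈ Y
    · have hL : (T.doTeam X x).doAssign Y y (T.doAssign X x s) W = y W := by
        rw [PreCausalTeam.doAssign_eq' _ hwfX, if_pos hWY]
      by_cases hWX : W ∈ X
      · have hR : (T.doTeam Y y).doAssign X x (T.doAssign Y y s) W = x W := by
          rw [PreCausalTeam.doAssign_eq' _ hwfY, if_pos hWX]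
        rw [hL, hR, hcompat W hWX hWY]
        exact ⟨rfl, hy W hWY⟩
      · have hR : (T.doTeam Y y).doAssign X x (T.doAssign Y y s) W = y W := by
          rw [PreCausalTeam.doAssign_eq' _ hwfY, if_neg hWX,
            PreCausalTeam.doTeam_fn', if_pos hWY, Option.getD_none, gY s W hWY]
        rw [hL, hR]
        exact ⟨rfl, hy W hWY⟩
    · by_cases hWX : W ∈ X
      · have hL : (T.doTeam X x).doAssign Y y (T.doAssign X x s) W = x W := by
          rw [PreCausalTeam.doAssign_eq' _ hwfX, if_neg hWY,
            PreCausalTeam.doTeam_fn', if_pos hWX, Option.getD_none, gX s W hWX]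
        have hR : (T.doTeam Y y).doAssign X x (T.doAssign Y y s) W = x W := by
          rw [PreCausalTeam.doAssign_eq' _ hwfY, if_pos hWX]
        rw [hL, hR]
        exact ⟨rfl, hx W hWX⟩
      · by_cases hWe : W ∈ T.endo
        · -- main case: endogenous, not intervened
          rw [PreCausalTeam.doAssign_eq' _ hwfX, if_neg hWY,
            PreCausalTeam.doAssign_eq' _ hwfY, if_neg hWX,
            PreCausalTeam.doTeam_fn', if_neg hWX, PreCausalTeam.doTeam_fn', if_neg hWY]
          have hfneq : T.fn W (fun P => if (T.doTeam X x).edge P W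
                then (T.doTeam X x).doAssign Y y (T.doAssign X x s) P
                else T.doAssign X x s P)
              = T.fn W (fun P => if (T.doTeam Y y).edge P W
                then (T.doTeam Y y).doAssign X x (T.doAssign Y y s) P
                else T.doAssign Y y s P) := by
            apply hdep
            intro P hp
            rw [if_pos ((PreCausalTeam.doTeam_edge' T X x P W).mpr ⟨hp, hWX⟩),
              if_pos ((PreCausalTeam.doTeam_edge' T Y y P W).mpr ⟨hp, hWY⟩)]
            exact (ih P hp).1
          have hsome : (T.fn W (fun P => if (T.doTeam X x).edge P W
                then (T.doTeam X x).doAssign Y y (T.doAssign X x s) P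
                else T.doAssign X x s P)).isSome := by
            apply hpar W hWe
            intro P hp
            rw [if_pos ((PreCausalTeam.doTeam_edge' T X x P W).mpr ⟨hp, hWX⟩)]
            exact (ih P hp).2
          obtain ⟨a, ha⟩ := Option.isSome_iff_exists.mp hsome
          rw [ha] at hfneq ⊢
          rw [← hfneq]
          exact ⟨rfl, hranfn W _ a ha⟩
        · -- exogenous, not intervened: value stays s W
          rw [PreCausalTeam.doAssign_eq' _ hwfX, if_neg hWY,
            PreCausalTeam.doAssign_eq' _ hwfY, if_neg hWX,
            PreCausalTeam.doTeam_fn', if_neg hWX, PreCausalTeam.doTeam_fn', if_neg hWY,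
            gXo s W hWX hWe, gYo s W hWY hWe]
          simp only [hnone W hWe, Option.getD_none]
          exact ⟨trivial, hran s hs W⟩
  -- assemble the structure equality
  apply PreCausalTeam.pre_ext
  · show (T.doTeam X x).doAssign Y y '' (T.doAssign X x '' T.team)
      = (T.doTeam Y y).doAssign X x '' (T.doAssign Y y '' T.team)
    rw [Set.image_image, Set.image_image]
    exact Set.image_congr fun s hs => funext fun W => (key s hs W).1
  · show (T.endo \ X) \ Y = (T.endo \ Y) \ X
    exact Set.diff_diff_comm
  · show (fun a b => ((T.edge a b ∧ b ∉ X) ∧ b ∉ Y)) = fun a b => ((T.edge a b ∧ b ∉ Y) ∧ b ∉ X)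
    funext a b
    exact propext (by tauto)
  · rfl
  · show (fun W s => if W ∈ Y then none else if W ∈ X then none else T.fn W s)
      = fun W s => if W ∈ X then none else if W ∈ Y then none else T.fn W s
    funext W s
    by_cases h1 : W ∈ X <;> by_cases h2 : W ∈ Y <;> simp [h1, h2]
end

section
/- Let T be a recursive causal team (G(T) finite and acyclic), X, Y ⊆ dom(T), x ∈ Ran(X), y ∈ Ran(Y), and let X' = X \ Y with x' the restriction of x to X'. Then (T_{X=x})_{Y=y} = (T_{X'=x'})_{Y=y}. Consequently the rule CF-OUT is valid: T ⊨ X=x □→ (Y=y □→ ψ) if and only if T ⊨ (X'=x' ∧ Y=y) □→ ψ. -/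
open scoped Classical

/-- Classical formulas: Boolean combinations of atoms `Y = y` and `Y ≠ y`. -/
inductive ClForm (V A : Type) where
  | eq : V → A → ClForm V A
  | neq : V → A → ClForm V A
  | conj : ClForm V A → ClForm V A → ClForm V A
  | disj : ClForm V A → ClForm V A → ClForm V A

/-- Tarskian satisfaction of a classical formula by a single assignment. -/
def ClForm.sat {V A : Type} (s : V → A) : ClForm V A → Prop
  | .eq Y a => s Y = a
  | .neq Y a => s Y ≠ a
  | .conj φ ψ => ClForm.sat s φ ∧ ClForm.sat s ψ
  | .disj φ ψ => ClForm.sat s φ ∨ ClForm.sat s ψ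

/-- Formulas of the language `CD`: atoms `Y = y`, `Y ≠ y`, dependence atoms `=(X; Y)`,
conjunction, (tensor) disjunction, selective implication `θ ⊃ χ` (with classical
antecedent) and interventionist counterfactual `X = x □→ χ`. -/
inductive CDForm (V A : Type) where
  | eq : V → A → CDForm V A
  | neq : V → A → CDForm V A
  | dep : Set V → V → CDForm V A
  | conj : CDForm V A → CDForm V A → CDForm V A
  | disj : CDForm V A → CDForm V A → CDForm V A
  | selimp : ClForm V A → CDForm V A → CDForm V A
  | cf : Set V → (V → A) → CDForm V A → CDForm V A

/-- Team satisfaction for `CD` formulas over causal teams. -/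
def CDForm.sat {V A : Type} : CDForm V A → PreCausalTeam V A → Prop
  | .eq Y a, T => ∀ s ∈ T.team, s Y = a
  | .neq Y a, T => ∀ s ∈ T.team, s Y ≠ a
  | .dep Xs Y, T => ∀ s ∈ T.team, ∀ s' ∈ T.team,
      (∀ X ∈ Xs, s X = s' X) → s Y = s' Y
  | .conj φ ψ, T => CDForm.sat φ T ∧ CDForm.sat ψ T
  | .disj φ ψ, T => ∃ S₁ S₂ : Set (V → A), S₁ ∪ S₂ = T.team ∧
      CDForm.sat φ (T.withTeam S₁) ∧ CDForm.sat ψ (T.withTeam S₂)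
  | .selimp θ χ, T => CDForm.sat χ (T.withTeam {s | s ∈ T.team ∧ ClForm.sat s θ})
  | .cf X x χ, T => CDForm.sat χ (T.doTeam X x)

namespace PreCausalTeam

variable {V A : Type}

lemma wf_of_recursive [Fintype V] (T : PreCausalTeam V A) (hrec : T.Recursive) :
    WellFounded T.edge := by
  have h1 : IsIrrefl V (Relation.TransGen T.edge) := ⟨hrec⟩
  have h2 : IsTrans V (Relation.TransGen T.edge) := ⟨fun _ _ _ => Relation.TransGen.trans⟩
  exact Subrelation.wf (fun h => Relation.TransGen.single h)
    (Finite.wellFounded_of_trans_of_irrefl _)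

lemma doAssign_spec (T : PreCausalTeam V A) (X : Set V) (x : V → A) (s : V → A)
    (h : WellFounded T.edge) (v : V) :
    T.doAssign X x s v =
      if v ∈ X then x v
      else (T.fn v fun P => if T.edge P v then T.doAssign X x s P else s P).getD (s v) := by
  have hfun : T.doAssign X x s = WellFounded.fix (C := fun _ => A) h (fun W ih =>
      if W ∈ X then x W
      else (T.fn W fun P => if hp : T.edge P W then ih P hp else s P).getD (s W)) := by
    funext w
    simp only [doAssign, dif_pos h]
  conv_lhs => rw [hfun, WellFounded.fix_eq]
  simp only [← hfun, dite_eq_ite]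

lemma doAssign_mem_ran (T : PreCausalTeam V A) (hcau : T.IsCausal) (X : Set V) (x : V → A)
    (s : V → A) (hx : ∀ v ∈ X, x v ∈ T.ran v) (hs : ∀ v, s v ∈ T.ran v)
    (h : WellFounded T.edge) (v : V) : T.doAssign X x s v ∈ T.ran v := by
  rw [doAssign_spec _ _ _ _ h]
  split
  · exact hx v ‹_›
  · rcases hfn : T.fn v _ with _ | a
    · simpa using hs v
    · simpa using hcau.2.2.2.1 v _ a hfn

lemma doAssign_doAssign (T : PreCausalTeam V A) (hcau : T.IsCausal) (hpar : T.Parametric)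
    (h : WellFounded T.edge) (X Y : Set V) (x y : V → A)
    (hx : ∀ v ∈ X, x v ∈ T.ran v) (hy : ∀ v ∈ Y, y v ∈ T.ran v)
    (s : V → A) (hs : ∀ v, s v ∈ T.ran v) (v : V) :
    (T.doTeam X x).doAssign Y y (T.doAssign X x s) v =
      T.doAssign (X ∪ Y) (fun w => if w ∈ Y then y w else x w) s v := by
  have h1 : WellFounded (T.doTeam X x).edge := Subrelation.wf (fun hq => hq.1) h
  have hz : ∀ w ∈ X ∪ Y, (if w ∈ Y then y w else x w) ∈ T.ran w := by
    intro w hw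
    by_cases hwY : w ∈ Y
    · simpa [hwY] using hy w hwY
    · have hwX : w ∈ X := hw.resolve_right hwY
      simpa [hwY] using hx w hwX
  induction v using WellFounded.induction h with
  | _ v ih =>
  rw [doAssign_spec _ _ _ _ h1, doAssign_spec T (X ∪ Y) _ s h]
  by_cases hvY : v ∈ Y
  · simp [hvY, Set.mem_union]
  by_cases hvX : v ∈ X
  · have hL : (T.doTeam X x).fn v
        (fun P => if (T.doTeam X x).edge P v then
          (T.doTeam X x).doAssign Y y (T.doAssign X x s) P else T.doAssign X x s P) = none := by
      simp [doTeam, hvX]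
    rw [if_neg hvY, if_pos (Set.mem_union_left Y hvX), hL]
    simp only [Option.getD_none]
    rw [doAssign_spec _ _ _ _ h, if_pos hvX, if_neg hvY]
  · -- v ∉ X ∪ Y
    have hvXY : v ∉ X ∪ Y := by simp [hvX, hvY]
    rw [if_neg hvY, if_neg hvXY]
    have hargs : (T.doTeam X x).fn v
        (fun P => if (T.doTeam X x).edge P v then
          (T.doTeam X x).doAssign Y y (T.doAssign X x s) P else T.doAssign X x s P) =
        T.fn v (fun P => if T.edge P v then
          T.doAssign (X ∪ Y) (fun w => if w ∈ Y then y w else x w) s P else s P) := by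
      have : (T.doTeam X x).fn v
          (fun P => if (T.doTeam X x).edge P v then
            (T.doTeam X x).doAssign Y y (T.doAssign X x s) P else T.doAssign X x s P) =
          T.fn v (fun P => if (T.doTeam X x).edge P v then
            (T.doTeam X x).doAssign Y y (T.doAssign X x s) P else T.doAssign X x s P) := by
        simp [doTeam, hvX]
      rw [this]
      apply hcau.2.2.1
      intro P hP
      have hedge : (T.doTeam X x).edge P v := ⟨hP, hvX⟩
      simp only [if_pos hedge, if_pos hP]
      exact ih P hP
    rw [hargs]
    by_cases hvE : v ∈ T.endo
    · have hsome : (T.fn v (fun P => if T.edge P v then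
          T.doAssign (X ∪ Y) (fun w => if w ∈ Y then y w else x w) s P else s P)).isSome := by
        apply hpar v hvE
        intro P hP
        rw [if_pos hP]
        exact doAssign_mem_ran T hcau _ _ _ hz hs h P
      rcases Option.isSome_iff_exists.mp hsome with ⟨a, ha⟩
      rw [ha]
      simp
    · have hnone := hcau.2.1 v hvE
      rw [hnone]
      simp only [Option.getD_none]
      rw [doAssign_spec _ _ _ _ h, if_neg hvX, hnone]
      simp

lemma doTeam_doTeam [Fintype V] (T : PreCausalTeam V A)
    (hcau : T.IsCausal) (hpar : T.Parametric) (hrec : T.Recursive)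
    (X Y : Set V) (x y : V → A)
    (hx : ∀ v ∈ X, x v ∈ T.ran v) (hy : ∀ v ∈ Y, y v ∈ T.ran v) :
    (T.doTeam X x).doTeam Y y = T.doTeam (X ∪ Y) (fun w => if w ∈ Y then y w else x w) := by
  have h : WellFounded T.edge := T.wf_of_recursive hrec
  have hteam : (T.doTeam X x).doAssign Y y '' ((T.doTeam X x).team) =
      T.doAssign (X ∪ Y) (fun w => if w ∈ Y then y w else x w) '' T.team := by
    show (T.doTeam X x).doAssign Y y '' (T.doAssign X x '' T.team) = _
    rw [Set.image_image]
    apply Set.image_congr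
    intro s hs
    funext v
    exact doAssign_doAssign T hcau hpar h X Y x y hx hy s (fun w => hcau.1 s hs w) v
  show PreCausalTeam.mk _ _ _ _ _ = PreCausalTeam.mk _ _ _ _ _
  rw [PreCausalTeam.mk.injEq]
  refine ⟨hteam, ?_, ?_, rfl, ?_⟩
  · show (T.endo \ X) \ Y = T.endo \ (X ∪ Y)
    rw [Set.diff_diff]
  · funext a b
    show ((T.edge a b ∧ b ∉ X) ∧ b ∉ Y) = (T.edge a b ∧ b ∉ X ∪ Y)
    apply propext
    constructor
    · rintro ⟨⟨he, hbX⟩, hbY⟩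
      exact ⟨he, by simp [Set.mem_union, hbX, hbY]⟩
    · rintro ⟨he, hb⟩
      simp only [Set.mem_union, not_or] at hb
      exact ⟨⟨he, hb.1⟩, hb.2⟩
  · funext W s
    by_cases hWY : W ∈ Y <;> by_cases hWX : W ∈ X <;>
      simp [doTeam, hWY, hWX, Set.mem_union]

end PreCausalTeam

/-- For a (parametric, recursive) causal team `T` with finite acyclic
graph, sets of variables `X, Y` with values `x ∈ Ran(X)`, `y ∈ Ran(Y)`, and `X' = X \ Y`
(with `x' = x` restricted to `X'`), one has `(T_{X=x})_{Y=y} = (T_{X'=x'})_{Y=y}`.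
Consequently the rule CF-OUT is valid: for every formula `ψ`,
`T ⊨ X=x □→ (Y=y □→ ψ)` iff `T ⊨ (X'=x' ∧ Y=y) □→ ψ`. -/
theorem cf_out {V A : Type} [Fintype V]
    (T : PreCausalTeam V A)
    (hcau : T.IsCausal) (hpar : T.Parametric) (hrec : T.Recursive)
    (X Y : Set V) (x y : V → A)
    (hx : ∀ v ∈ X, x v ∈ T.ran v) (hy : ∀ v ∈ Y, y v ∈ T.ran v) :
    (T.doTeam X x).doTeam Y y = (T.doTeam (X \ Y) x).doTeam Y y ∧
    ∀ ψ : CDForm V A,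
      CDForm.sat (CDForm.cf X x (CDForm.cf Y y ψ)) T ↔
      CDForm.sat (CDForm.cf ((X \ Y) ∪ Y) (fun v => if v ∈ Y then y v else x v) ψ) T := by
  have hx' : ∀ v ∈ X \ Y, x v ∈ T.ran v := fun v hv => hx v hv.1
  have hXY : X ∪ Y = (X \ Y) ∪ Y := (Set.diff_union_self).symm
  have h1 := T.doTeam_doTeam hcau hpar hrec X Y x y hx hy
  have h2 := T.doTeam_doTeam hcau hpar hrec (X \ Y) Y x y hx' hy
  have hmain : (T.doTeam X x).doTeam Y y = (T.doTeam (X \ Y) x).doTeam Y y := by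
    rw [h1, h2, hXY]
  refine ⟨hmain, fun ψ => ?_⟩
  show CDForm.sat ψ ((T.doTeam X x).doTeam Y y) ↔
    CDForm.sat ψ (T.doTeam ((X \ Y) ∪ Y) (fun v => if v ∈ Y then y v else x v))
  rw [h1, hXY]
end
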